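/- Let G be a MAP Abelian topological group with character group X = G^. Let τ_w = σ(X, G) be the topology on X of pointwise convergence on elements of G, and τ_{w*} = σ(X, G^^) the topology on X of pointwise convergence on elements of the bidual G^^ (both are Hausdorff group topologies with τ_w ⊆ τ_{w*}). The following are equivalent: (i) the s-refinements of (X, τ_w) and (X, τ_{w*}) coincide, where the s-refinement of (X, ν) is X with the finest Hausdorff group topology in which every ν-null sequence converges to 0; (ii) g_{bG}(𝔟(α(G))) = g_{bG}(𝔟(G^^)) in the Bohr compactification bG. In particular, if G is reflexive then (i) and (ii) hold. -/

import Mathlib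

open Filter Topology

noncomputable section

/-- The circle group `𝕋 = ℝ/ℤ`. -/
abbrev 𝕋 : Type := AddCircle (1 : ℝ)

/-- The sequence `u` converges to `0` in the topology `τ`. -/
def TendsToZero {G : Type*} [AddCommGroup G] (τ : TopologicalSpace G) (u : ℕ → G) : Prop :=
  Filter.Tendsto u Filter.atTop (@nhds G τ 0)

/-- `τ` is a Hausdorff group topology on `G` in which every sequence of `S` converges to `0`. -/
def IsTopFor {G : Type*} [AddCommGroup G] (S : Set (ℕ → G)) (τ : TopologicalSpace G) : Prop :=
  @IsTopologicalAddGroup G τ _ ∧ @T2Space G τ ∧ ∀ u ∈ S, TendsToZero τ u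

/-- `S` is a `TS`-set of sequences in `G`. -/
def IsTSSet {G : Type*} [AddCommGroup G] (S : Set (ℕ → G)) : Prop :=
  ∃ τ : TopologicalSpace G, IsTopFor S τ

/-- `τ` is the finest Hausdorff group topology on `G` in which every sequence of `S`
converges to `0` (recall that in Mathlib's order on topologies, `≤` means "finer"). -/
def IsFinestFor {G : Type*} [AddCommGroup G] (S : Set (ℕ → G)) (τ : TopologicalSpace G) : Prop :=
  IsTopFor S τ ∧ ∀ τ' : TopologicalSpace G, IsTopFor S τ' → τ ≤ τ'

/-- The group topology `τ` on `G` is totally bounded (precompact): every neighborhood `U` of `0`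
has finitely many translates covering `G`. -/
def IsPrecompactTop {G : Type*} [AddCommGroup G] (τ : TopologicalSpace G) : Prop :=
  ∀ U ∈ @nhds G τ 0, ∃ F : Finset G, ∀ g : G, ∃ f ∈ F, g - f ∈ U

/-- `τ` is a totally bounded Hausdorff group topology on `G` in which every sequence of `S`
converges to `0`. -/
def IsPTopFor {G : Type*} [AddCommGroup G] (S : Set (ℕ → G)) (τ : TopologicalSpace G) : Prop :=
  IsTopFor S τ ∧ IsPrecompactTop τ

/-- `S` is a `TBS`-set of sequences in `G`. -/
def IsTBSSet {G : Type*} [AddCommGroup G] (S : Set (ℕ → G)) : Prop :=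
  ∃ τ : TopologicalSpace G, IsPTopFor S τ

/-- `τ` is the finest totally bounded Hausdorff group topology on `G` in which every sequence
of `S` converges to `0`. -/
def IsFinestPFor {G : Type*} [AddCommGroup G] (S : Set (ℕ → G)) (τ : TopologicalSpace G) : Prop :=
  IsPTopFor S τ ∧ ∀ τ' : TopologicalSpace G, IsPTopFor S τ' → τ ≤ τ'

/-- `s_S(G_d^∧)`: the characters `χ` of the discrete group `G` with `χ(u_n) → 0` for all
`u ∈ S`. -/
def sS {G : Type*} [AddCommGroup G] (S : Set (ℕ → G)) : Set (G →+ 𝕋) :=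
  {χ | ∀ u ∈ S, Filter.Tendsto (fun n => χ (u n)) Filter.atTop (nhds (0 : 𝕋))}

/-- `T_H`: the coarsest (initial) topology on `G` making every character of `H` continuous. -/
def TH {G : Type*} [AddCommGroup G] (H : Set (G →+ 𝕋)) : TopologicalSpace G :=
  ⨅ χ ∈ H, TopologicalSpace.induced (χ : G → 𝕋) inferInstance

/-- `(G, τ)` is maximally almost periodic: continuous characters separate points. -/
def IsMAP {G : Type*} [AddCommGroup G] (τ : TopologicalSpace G) : Prop :=
  ∀ g : G, g ≠ 0 → ∃ χ : G →+ 𝕋, @Continuous G 𝕋 τ _ χ ∧ χ g ≠ 0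

/-- The dual group of `(G, τ)`: the subgroup of the character group of `G_d` consisting of
`τ`-continuous characters. -/
def dual {G : Type*} [AddCommGroup G] (τ : TopologicalSpace G) : AddSubgroup (G →+ 𝕋) where
  carrier := {χ : G →+ 𝕋 | @Continuous G 𝕋 τ _ χ}
  zero_mem' := by
    letI := τ
    show Continuous fun _ : G => (0 : 𝕋)
    exact continuous_const
  add_mem' := by
    intro a b ha hb
    letI := τ
    show Continuous fun g : G => a g + b g
    exact Continuous.add ha hb
  neg_mem' := by
    intro a ha
    letI := τ
    show Continuous fun g : G => -(a g)
    exact Continuous.neg ha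

/-- The compact-open topology on the dual group of `(G, τ)`. -/
def coTop {G : Type*} [AddCommGroup G] (τ : TopologicalSpace G) :
    TopologicalSpace ↥(dual τ) :=
  TopologicalSpace.generateFrom
    {T | ∃ (K : Set G) (U : Set 𝕋), @IsCompact G τ K ∧ IsOpen U ∧
          T = {χ : ↥(dual τ) | ∀ g ∈ K, (χ : G →+ 𝕋) g ∈ U}}

/-- Evaluation at `g ∈ G`, as a character of the dual group of `(G, τ)`; this is the value of the
canonical map `G → bG` at `g`. -/
def evalHom {G : Type*} [AddCommGroup G] (τ : TopologicalSpace G) (g : G) :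
    ↥(dual τ) →+ 𝕋 where
  toFun χ := (χ : G →+ 𝕋) g
  map_zero' := rfl
  map_add' _ _ := rfl

/-- The natural (compact-open = pointwise) topology on the character group `A_d^∧` of a
discrete abelian group `A`. -/
def Xtop (A : Type*) [AddCommGroup A] : TopologicalSpace (A →+ 𝕋) :=
  TopologicalSpace.induced (fun χ : A →+ 𝕋 => (χ : A → 𝕋)) Pi.topologicalSpace

/-- For a sequence `u` of characters of `X`, `su u = s_u(X) = {x | u_n(x) → 0}`. -/
def su {X : Type*} [AddCommGroup X] (u : ℕ → (X →+ 𝕋)) : Set X :=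
  {x | Filter.Tendsto (fun n => u n x) Filter.atTop (nhds (0 : 𝕋))}

/-- The `g`-closure of a subset `H` of the abelian topological group `(X, τ)`: the intersection
of all `s_u(X)` over sequences `u` of continuous characters of `(X, τ)` with `H ⊆ s_u(X)`. -/
def gClosure {X : Type*} [AddCommGroup X] (τ : TopologicalSpace X) (H : Set X) : Set X :=
  ⋂ u ∈ {u : ℕ → (X →+ 𝕋) | (∀ n, @Continuous X 𝕋 τ _ (u n)) ∧ H ⊆ su u}, su u

/-- `H` is a `g`-closed subset of `(X, τ)`. -/
def IsGClosed {X : Type*} [AddCommGroup X] (τ : TopologicalSpace X) (H : Set X) : Prop :=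
  gClosure τ H = H

/-- The weight of a topology: the least cardinality of a topological basis. -/
def topWeight {X : Type*} (τ : TopologicalSpace X) : Cardinal :=
  ⨅ B ∈ {B : Set (Set X) | @TopologicalSpace.IsTopologicalBasis X τ B}, Cardinal.mk B

/-- The group uniformity of the group topology `τ` on `G`. -/
def uniformOf {G : Type*} [AddCommGroup G] (τ : TopologicalSpace G)
    (h : @IsTopologicalAddGroup G τ _) : UniformSpace G :=
  @IsTopologicalAddGroup.rightUniformSpace G _ τ h

end

/-- `(G, τ)` is a reflexive topological abelian group: the evaluation map into the bidual is a
topological isomorphism. -/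
def IsReflexive {G : Type*} [AddCommGroup G] (τ : TopologicalSpace G) : Prop :=
  ∃ e : G ≃+ ↥(dual (coTop τ)),
    (∀ g : G, ((e g : ↥(dual τ) →+ 𝕋)) = evalHom τ g) ∧
    @Continuous _ _ τ (coTop (coTop τ)) ⇑e ∧ @Continuous _ _ (coTop (coTop τ)) τ ⇑e.symm

/-- The weak topology `σ(X, G)` on the dual group `X = G^∧`: pointwise convergence on `G`. -/
noncomputable def tauW {G : Type*} [AddCommGroup G] (τ : TopologicalSpace G) :
    TopologicalSpace ↥(dual τ) :=
  TopologicalSpace.induced (fun χ : ↥(dual τ) => fun g : G => (χ : G →+ 𝕋) g)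
    Pi.topologicalSpace

/-- The weak* topology `σ(X, G^∧∧)` on the dual group `X = G^∧`: pointwise convergence on the
bidual `G^∧∧`. -/
noncomputable def tauWStar {G : Type*} [AddCommGroup G] (τ : TopologicalSpace G) :
    TopologicalSpace ↥(dual τ) :=
  TopologicalSpace.induced
    (fun χ : ↥(dual τ) => fun ξ : ↥(dual (coTop τ)) => (ξ : ↥(dual τ) →+ 𝕋) χ)
    Pi.topologicalSpace

/-- The set of all null sequences of a topology `ν`. -/
def nullSeqs {X : Type*} [AddCommGroup X] (ν : TopologicalSpace X) : Set (ℕ → X) :=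
  {v | TendsToZero ν v}

/-- Condition (i) of Statement 18: the `s`-refinements of `(X, τ_w)` and `(X, τ_{w*})`
coincide, i.e. they determine the same finest Hausdorff group topology. -/
def SRefEq {G : Type*} [AddCommGroup G] (τ : TopologicalSpace G) : Prop :=
  ∀ μ : TopologicalSpace ↥(dual τ),
    IsFinestFor (nullSeqs (tauW τ)) μ ↔ IsFinestFor (nullSeqs (tauWStar τ)) μ

/-- Condition (ii) of Statement 18: `g_{bG}(𝔟(α(G))) = g_{bG}(𝔟(G^∧∧))` in the Bohr
compactification `bG = ((G^∧)_d)^∧`. -/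
def GCloEq {G : Type*} [AddCommGroup G] (τ : TopologicalSpace G) : Prop :=
  gClosure (Xtop ↥(dual τ)) (Set.range (evalHom τ)) =
    gClosure (Xtop ↥(dual τ)) (↑(dual (coTop τ)))


noncomputable section SepLemma
open MeasureTheory


lemma toCircle_eq_one_iff {a : 𝕋} : AddCircle.toCircle a = 1 ↔ a = 0 :=
  ⟨fun h => AddCircle.injective_toCircle (T := (1:ℝ)) one_ne_zero
      (h.trans AddCircle.toCircle_zero.symm), fun h => h ▸ AddCircle.toCircle_zero⟩

variable {ι : Type*} [Fintype ι]

/-- character of 𝕋^ι attached to an integer vector -/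
def charF (m : ι → ℤ) : C((ι → 𝕋), ℂ) :=
  ⟨fun p => (AddCircle.toCircle (∑ i, m i • p i) : ℂ), by
    have h1 : Continuous fun p : ι → 𝕋 => ∑ i, m i • p i :=
      continuous_finset_sum _ fun i _ => ((continuous_apply i).zsmul (m i))
    exact continuous_subtype_val.comp (AddCircle.continuous_toCircle.comp h1)⟩

lemma charF_apply (m : ι → ℤ) (p : ι → 𝕋) :
    charF m p = (AddCircle.toCircle (∑ i, m i • p i) : ℂ) := rfl

lemma sum_zsmul_add (m : ι → ℤ) (p q : ι → 𝕋) :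
    ∑ i, m i • (p i + q i) = (∑ i, m i • p i) + ∑ i, m i • q i := by
  rw [← Finset.sum_add_distrib]; exact Finset.sum_congr rfl fun i _ => smul_add _ _ _

lemma charF_mul (m m' : ι → ℤ) : charF m * charF m' = charF (m + m') := by
  ext p
  simp only [ContinuousMap.mul_apply, charF_apply]
  have hsum : ∑ i, (m + m') i • p i = (∑ i, m i • p i) + ∑ i, m' i • p i := by
    rw [← Finset.sum_add_distrib]
    exact Finset.sum_congr rfl fun i _ => by simp [add_zsmul]
  rw [hsum, AddCircle.toCircle_add, Circle.coe_mul]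

lemma charF_star (m : ι → ℤ) : star (charF m) = charF (-m) := by
  ext p
  simp only [ContinuousMap.star_apply, charF_apply, RCLike.star_def]
  have h : AddCircle.toCircle (∑ i, (-m) i • p i) = (AddCircle.toCircle (∑ i, m i • p i))⁻¹ := by
    rw [eq_inv_iff_mul_eq_one, ← AddCircle.toCircle_add, toCircle_eq_one_iff,
      ← Finset.sum_add_distrib]
    refine Finset.sum_eq_zero fun i _ => by simp [← add_zsmul]
  rw [h]
  exact (Circle.coe_inv_eq_conj _).trans rfl |>.symm ▸ rfl

lemma charF_star' (m : ι → ℤ) : star (charF m) = charF (-m) := charF_star m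

lemma charF_zero : charF (0 : ι → ℤ) = 1 := by
  ext p; simp [charF_apply]

/-- The star subalgebra spanned by the characters. -/
def charAlg (ι : Type*) [Fintype ι] : StarSubalgebra ℂ C((ι → 𝕋), ℂ) where
  carrier := (Submodule.span ℂ (Set.range (charF (ι := ι))) : Submodule ℂ C((ι → 𝕋), ℂ))
  mul_mem' := by
    intro a b ha hb
    have h := Submodule.mul_mem_mul (M := Submodule.span ℂ (Set.range (charF (ι := ι))))
      (N := Submodule.span ℂ (Set.range (charF (ι := ι)))) ha hb
    rw [Submodule.span_mul_span] at h
    refine Submodule.span_le.2 ?_ h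
    rintro f ⟨x, ⟨m, rfl⟩, y, ⟨m', rfl⟩, rfl⟩
    show charF m * charF m' ∈ _
    rw [charF_mul]
    exact Submodule.subset_span ⟨m + m', rfl⟩
  one_mem' := by
    rw [← charF_zero]; exact Submodule.subset_span ⟨0, rfl⟩
  add_mem' := fun ha hb => Submodule.add_mem _ ha hb
  zero_mem' := Submodule.zero_mem _
  algebraMap_mem' := fun c => by
    have h1 : (algebraMap ℂ C((ι → 𝕋), ℂ)) c = c • charF (0 : ι → ℤ) := by
      rw [charF_zero, Algebra.algebraMap_eq_smul_one]
    show (algebraMap ℂ C((ι → 𝕋), ℂ)) c ∈ Submodule.span ℂ (Set.range (charF (ι := ι)))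
    rw [h1]
    exact Submodule.smul_mem _ _ (Submodule.subset_span ⟨0, rfl⟩)
  star_mem' := by
    intro a ha
    refine Submodule.span_induction ?_ ?_ ?_ ?_ ha
    · rintro f ⟨m, rfl⟩; rw [charF_star]; exact Submodule.subset_span ⟨-m, rfl⟩
    · rw [star_zero]; exact Submodule.zero_mem _
    · intro f g _ _ hf hg; rw [star_add]; exact Submodule.add_mem _ hf hg
    · intro c f _ hf; rw [star_smul]; exact Submodule.smul_mem _ _ hf

lemma charAlg_separates [DecidableEq ι] : (charAlg ι).SeparatesPoints := by
  intro p q hpq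
  have : ∃ i, p i ≠ q i := by
    by_contra h; push_neg at h; exact hpq (funext h)
  obtain ⟨i, hi⟩ := this
  refine ⟨_, ⟨charF (Pi.single i (1:ℤ)), Submodule.subset_span ⟨_, rfl⟩, rfl⟩, ?_⟩
  have hp : ∀ r : ι → 𝕋, ∑ j, (Pi.single i (1:ℤ) : ι → ℤ) j • r j = r i := by
    intro r
    rw [Finset.sum_eq_single i]
    · simp
    · intro b _ hb; simp [Pi.single_eq_of_ne hb]
    · intro h; exact absurd (Finset.mem_univ i) h
  simp only [charF_apply, hp]
  intro h
  exact hi (AddCircle.injective_toCircle (T := (1:ℝ)) one_ne_zero (Subtype.ext h))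

/-- Key separation lemma: a closed subgroup of `𝕋^ι` is determined by integer annihilators. -/
lemma exists_int_annihilator {D : AddSubgroup (ι → 𝕋)} (hD : IsClosed (D : Set (ι → 𝕋)))
    (t : ι → 𝕋) (ht : t ∉ D) :
    ∃ m : ι → ℤ, (∀ d ∈ D, ∑ i, m i • d i = 0) ∧ ∑ i, m i • t i ≠ 0 := by
  by_contra hcon
  push_neg at hcon
  have hyp : ∀ m : ι → ℤ, (∀ d ∈ D, ∑ i, m i • d i = 0) → ∑ i, m i • t i = 0 := by
    intro m hm; by_contra h; exact h (hcon m hm)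
  -- set up Haar measure on the compact group D
  letI : CompactSpace D := isCompact_iff_compactSpace.mp (hD.isCompact)
  haveI : Nonempty D := ⟨0⟩
  borelize (ι → 𝕋)
  haveI : MeasurableSet (D : Set (ι → 𝕋)) := hD.measurableSet
  letI : MeasurableSpace D := Subtype.instMeasurableSpace
  haveI : BorelSpace D := Subtype.borelSpace _
  set μ : Measure D := Measure.addHaarMeasure (⊤ : TopologicalSpace.PositiveCompacts D) with hμ
  haveI : IsFiniteMeasure μ := CompactSpace.isFiniteMeasure
  -- the two functionals
  have hbound : ∀ (s : ι → 𝕋) (f : C((ι → 𝕋), ℂ)),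
      Integrable (fun d : D => f (s + (d : ι → 𝕋))) μ := by
    intro s f
    exact (f.continuous.comp (continuous_const.add continuous_subtype_val)).integrable_of_hasCompactSupport
      (HasCompactSupport.of_compactSpace _)
  have hbound0 : ∀ f : C((ι → 𝕋), ℂ), Integrable (fun d : D => f (d : ι → 𝕋)) μ := by
    intro f
    exact (f.continuous.comp continuous_subtype_val).integrable_of_hasCompactSupport
      (HasCompactSupport.of_compactSpace _)
  let L1 : C((ι → 𝕋), ℂ) →ₗ[ℂ] ℂ :=
    { toFun := fun f => ∫ d : D, f (t + (d : ι → 𝕋)) ∂μ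
      map_add' := fun f g => integral_add (hbound t f) (hbound t g)
      map_smul' := fun c f => integral_smul c _ }
  let L2 : C((ι → 𝕋), ℂ) →ₗ[ℂ] ℂ :=
    { toFun := fun f => ∫ d : D, f (d : ι → 𝕋) ∂μ
      map_add' := fun f g => integral_add (hbound0 f) (hbound0 g)
      map_smul' := fun c f => integral_smul c _ }
  have hcont1 : Continuous L1 := by
    refine (L1.mkContinuous ((μ Set.univ).toReal) fun f => ?_).continuous
    calc ‖∫ d : D, f (t + (d : ι → 𝕋)) ∂μ‖ ≤ ‖f‖ * (μ Set.univ).toReal :=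
          norm_integral_le_of_norm_le_const (Eventually.of_forall fun d => f.norm_coe_le_norm _)
      _ = (μ Set.univ).toReal * ‖f‖ := mul_comm _ _
  have hcont2 : Continuous L2 := by
    refine (L2.mkContinuous ((μ Set.univ).toReal) fun f => ?_).continuous
    calc ‖∫ d : D, f ((d : ι → 𝕋)) ∂μ‖ ≤ ‖f‖ * (μ Set.univ).toReal :=
          norm_integral_le_of_norm_le_const (Eventually.of_forall fun d => f.norm_coe_le_norm _)
      _ = (μ Set.univ).toReal * ‖f‖ := mul_comm _ _
  -- the functionals agree on the characters
  have hchar : ∀ m : ι → ℤ, L1 (charF m) = L2 (charF m) := by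
    intro m
    by_cases hz : ∀ d ∈ D, ∑ i, m i • d i = 0
    · have hmt : ∑ i, m i • t i = 0 := hyp m hz
      have h1 : ∀ d : D, charF m (t + (d : ι → 𝕋)) = 1 := by
        intro d
        have : ∑ i, m i • (t + (d : ι → 𝕋)) i = 0 := by
          have := sum_zsmul_add m t (d : ι → 𝕋)
          simp only [Pi.add_apply] at this ⊢
          rw [this, hmt, hz _ d.2, add_zero]
        rw [charF_apply, this, AddCircle.toCircle_zero, Circle.coe_one]
      have h2 : ∀ d : D, charF m ((d : ι → 𝕋)) = 1 := by
        intro d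
        rw [charF_apply, hz _ d.2, AddCircle.toCircle_zero, Circle.coe_one]
      show (∫ d : D, charF m (t + (d : ι → 𝕋)) ∂μ) = ∫ d : D, charF m ((d : ι → 𝕋)) ∂μ
      rw [integral_congr_ae (Eventually.of_forall h1), integral_congr_ae (Eventually.of_forall h2)]
    · push_neg at hz
      obtain ⟨d₀, hd₀D, hd₀⟩ := hz
      have hadd : ∀ p q : ι → 𝕋, charF m (p + q) = charF m p * charF m q := by
        intro p q
        simp only [charF_apply]
        have : ∑ i, m i • (p + q) i = (∑ i, m i • p i) + ∑ i, m i • q i := by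
          simpa only [Pi.add_apply] using sum_zsmul_add m p q
        rw [this, AddCircle.toCircle_add, Circle.coe_mul]
      have hψint : Integrable (fun d : D => charF m ((d : ι → 𝕋))) μ := hbound0 _
      have hψ0 : (∫ d : D, charF m ((d : ι → 𝕋)) ∂μ) = 0 := by
        have hinv := integral_add_left_eq_self (μ := μ) (⟨d₀, hd₀D⟩ : D)
          (f := fun d : D => charF m ((d : ι → 𝕋)))
        have heq : ∀ d : D, charF m (((⟨d₀, hd₀D⟩ : D) + d : D) : ι → 𝕋)
            = charF m d₀ * charF m ((d : ι → 𝕋)) := by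
          intro d
          rw [AddSubgroup.coe_add, hadd]
        rw [integral_congr_ae (Eventually.of_forall heq), integral_const_mul] at hinv
        have hne : charF m d₀ ≠ 1 := by
          rw [charF_apply]
          intro h
          exact hd₀ (toCircle_eq_one_iff.mp (Subtype.ext h))
        have hfac : (charF m d₀ - 1) * (∫ d : D, charF m ((d : ι → 𝕋)) ∂μ) = 0 := by
          rw [sub_mul, one_mul, hinv, sub_self]
        rcases mul_eq_zero.mp hfac with h | h
        · exact absurd (sub_eq_zero.mp h) hne
        · exact h
      have hL1 : L1 (charF m) = charF m t * ∫ d : D, charF m ((d : ι → 𝕋)) ∂μ := by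
        show (∫ d : D, charF m (t + (d : ι → 𝕋)) ∂μ) = _
        rw [integral_congr_ae (Eventually.of_forall fun d : D => hadd t (d : ι → 𝕋)),
          integral_const_mul]
      show L1 (charF m) = L2 (charF m)
      rw [hL1, hψ0, mul_zero]
      show (0 : ℂ) = ∫ d : D, charF m ((d : ι → 𝕋)) ∂μ
      rw [hψ0]
  -- by Stone–Weierstrass, the functionals agree everywhere
  classical
  have hdense : Dense ((charAlg ι : Set C((ι → 𝕋), ℂ))) := by
    have htop := ContinuousMap.starSubalgebra_topologicalClosure_eq_top_of_separatesPoints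
      (charAlg ι) charAlg_separates
    rw [dense_iff_closure_eq]
    have := congrArg (fun (A : StarSubalgebra ℂ C((ι → 𝕋), ℂ)) => (A : Set C((ι → 𝕋), ℂ))) htop
    simpa [StarSubalgebra.topologicalClosure_coe] using this
  have hLeq : (L1 : C((ι → 𝕋), ℂ) → ℂ) = L2 := by
    refine Continuous.ext_on hdense hcont1 hcont2 ?_
    intro f hf
    exact LinearMap.eqOn_span (fun x hx => by obtain ⟨m, rfl⟩ := hx; exact hchar m) hf
  -- apply to the distance function to D
  have hcd : Continuous fun p : ι → 𝕋 => (Metric.infDist p (D : Set (ι → 𝕋)) : ℂ) :=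
    Complex.continuous_ofReal.comp (Metric.continuous_infDist_pt _)
  set f₀ : C((ι → 𝕋), ℂ) := ⟨fun p => (Metric.infDist p (D : Set (ι → 𝕋)) : ℂ), hcd⟩ with hf₀
  have hL2f₀ : L2 f₀ = 0 := by
    show (∫ d : D, f₀ ((d : ι → 𝕋)) ∂μ) = 0
    rw [integral_congr_ae (Eventually.of_forall fun d : D => ?_), integral_zero]
    show (Metric.infDist (d : ι → 𝕋) (D : Set (ι → 𝕋)) : ℂ) = 0
    rw [Metric.infDist_zero_of_mem d.2, Complex.ofReal_zero]
  have hg : Continuous fun d : D => Metric.infDist (t + (d : ι → 𝕋)) (D : Set (ι → 𝕋)) :=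
    (Metric.continuous_infDist_pt _).comp (continuous_const.add continuous_subtype_val)
  have hL1f₀ : L1 f₀ = ((∫ d : D, Metric.infDist (t + (d : ι → 𝕋)) (D : Set (ι → 𝕋)) ∂μ : ℝ) : ℂ) := by
    exact integral_ofReal (𝕜 := ℂ)
      (f := fun d : D => Metric.infDist (t + (d : ι → 𝕋)) (D : Set (ι → 𝕋)))
  have hgint : Integrable (fun d : D => Metric.infDist (t + (d : ι → 𝕋)) (D : Set (ι → 𝕋))) μ :=
    hg.integrable_of_hasCompactSupport (HasCompactSupport.of_compactSpace _)
  have hpos : 0 < ∫ d : D, Metric.infDist (t + (d : ι → 𝕋)) (D : Set (ι → 𝕋)) ∂μ := by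
    rw [integral_pos_iff_support_of_nonneg (fun d => Metric.infDist_nonneg) hgint]
    have hopen : IsOpen (Function.support fun d : D =>
        Metric.infDist (t + (d : ι → 𝕋)) (D : Set (ι → 𝕋))) := by
      rw [Function.support]
      exact isOpen_compl_singleton.preimage hg
    refine hopen.measure_pos μ ⟨0, ?_⟩
    show Metric.infDist (t + ((0 : D) : ι → 𝕋)) (D : Set (ι → 𝕋)) ≠ 0
    rw [AddSubgroup.coe_zero, add_zero]
    have : 0 < Metric.infDist t (D : Set (ι → 𝕋)) :=
      (hD.notMem_iff_infDist_pos ⟨0, D.zero_mem⟩).mp ht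
    exact this.ne'
  have : L1 f₀ = L2 f₀ := congrFun hLeq f₀
  rw [hL1f₀, hL2f₀] at this
  exact hpos.ne' (by exact_mod_cast this)

end SepLemma

section Density

/-- Density of the evaluation characters in the Bohr compactification. -/
lemma evalHom_dense {G : Type*} [AddCommGroup G] (τ : TopologicalSpace G)
    (ξ : ↥(dual τ) →+ 𝕋) :
    ξ ∈ @closure _ (Xtop ↥(dual τ)) (Set.range (evalHom τ)) := by
  letI := Xtop ↥(dual τ)
  rw [mem_closure_iff]
  intro o ho hξo
  rw [show (Xtop ↥(dual τ)) = TopologicalSpace.induced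
      (fun χ : ↥(dual τ) →+ 𝕋 => (χ : ↥(dual τ) → 𝕋)) Pi.topologicalSpace from rfl,
    isOpen_induced_iff] at ho
  obtain ⟨O', hO', ho⟩ := ho
  subst ho
  obtain ⟨I, u, hIu, hsub⟩ := (isOpen_pi_iff.mp hO') _ hξo
  -- the finite-dimensional projection
  let φ : G →+ ((↥I) → 𝕋) :=
    { toFun := fun g i => ((i : ↥(dual τ)) : G →+ 𝕋) g
      map_zero' := by funext i; simp
      map_add' := by intro a b; funext i; simp }
  let D' : AddSubgroup ((↥I) → 𝕋) := φ.range.topologicalClosure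
  let t' : (↥I) → 𝕋 := fun i => ξ (i : ↥(dual τ))
  by_cases ht' : t' ∈ D'
  · -- approximate ξ by an evaluation
    have hD'c : (D' : Set ((↥I) → 𝕋)) = closure (φ.range : Set ((↥I) → 𝕋)) := rfl
    have hU'open : IsOpen (Set.pi Set.univ fun i : ↥I => u (i : ↥(dual τ))) :=
      isOpen_set_pi Set.finite_univ fun i _ => (hIu _ i.2).1
    have ht'U : t' ∈ Set.pi Set.univ fun i : ↥I => u (i : ↥(dual τ)) :=
      fun i _ => (hIu _ i.2).2
    have ht2 : t' ∈ closure (φ.range : Set ((↥I) → 𝕋)) := ht'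
    have := mem_closure_iff.mp ht2 _ hU'open ht'U
    obtain ⟨z, hzU, g, rfl⟩ := this
    refine ⟨evalHom τ g, ?_, ⟨g, rfl⟩⟩
    apply hsub
    intro x hx
    exact hzU ⟨x, hx⟩ trivial
  · -- impossible by the separation lemma
    exfalso
    obtain ⟨m, hann, hne⟩ := exists_int_annihilator
      (D := D') φ.range.isClosed_topologicalClosure t' ht'
    have hz : (∑ i : ↥I, m i • (i : ↥(dual τ))) = 0 := by
      refine Subtype.ext (AddMonoidHom.ext fun g => ?_)
      have h1 := map_sum (evalHom τ g) (fun i : ↥I => m i • (i : ↥(dual τ))) Finset.univ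
      simp only [map_zsmul] at h1
      have h2 := hann (φ g) (AddSubgroup.le_topologicalClosure _ ⟨g, rfl⟩)
      show evalHom τ g (∑ i : ↥I, m i • (i : ↥(dual τ))) = 0
      rw [h1]
      exact h2
    have h3 : ξ (∑ i : ↥I, m i • (i : ↥(dual τ))) = ∑ i : ↥I, m i • t' i := by
      rw [map_sum]
      exact Finset.sum_congr rfl fun i _ => by rw [map_zsmul]
    rw [hz, map_zero] at h3
    exact hne h3.symm

/-- A continuous character of `bG` vanishing on the evaluations vanishes everywhere. -/
lemma char_vanishing {G : Type*} [AddCommGroup G] (τ : TopologicalSpace G)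
    (v : (↥(dual τ) →+ 𝕋) →+ 𝕋) (hv : @Continuous _ _ (Xtop ↥(dual τ)) _ v)
    (h0 : ∀ g : G, v (evalHom τ g) = 0) (ξ : ↥(dual τ) →+ 𝕋) : v ξ = 0 := by
  letI := Xtop ↥(dual τ)
  have hC : IsClosed (v ⁻¹' {0}) := (isClosed_singleton).preimage hv
  have hsub : Set.range (evalHom τ) ⊆ v ⁻¹' {0} := by
    rintro w ⟨g, rfl⟩; exact h0 g
  have := closure_minimal hsub hC (evalHom_dense τ ξ)
  exact this

end Density


noncomputable section Soft

variable {G : Type*} [AddCommGroup G] (τ : TopologicalSpace G)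

/-- Evaluation at `g` is continuous for the compact-open topology on the dual. -/
lemma evalHom_mem_dual_coTop (g : G) : evalHom τ g ∈ dual (coTop τ) := by
  show @Continuous _ _ (coTop τ) _ (evalHom τ g)
  rw [@continuous_def _ _ (coTop τ) _]
  intro U hU
  have h : (evalHom τ g) ⁻¹' U
      = {χ : ↥(dual τ) | ∀ y ∈ ({g} : Set G), (χ : G →+ 𝕋) y ∈ U} := by
    ext χ; simp [evalHom]
  rw [h]
  exact TopologicalSpace.GenerateOpen.basic _
    ⟨{g}, U, @isCompact_singleton G τ g, hU, rfl⟩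

/-- The evaluation map `G →+ bG`. -/
def evalHomHom : G →+ (↥(dual τ) →+ 𝕋) where
  toFun := evalHom τ
  map_zero' := by ext χ; simp [evalHom]
  map_add' := fun a b => by ext χ; simp [evalHom]

lemma evalHomHom_continuous : @Continuous G _ τ (Xtop ↥(dual τ)) (evalHomHom τ) := by
  letI := τ
  letI : TopologicalSpace (↥(dual τ) →+ 𝕋) := Xtop ↥(dual τ)
  rw [show (Xtop ↥(dual τ)) = TopologicalSpace.induced
      (fun χ : ↥(dual τ) →+ 𝕋 => (χ : ↥(dual τ) → 𝕋)) Pi.topologicalSpace from rfl,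
    continuous_induced_rng]
  exact continuous_pi fun χ => χ.2

/-- Point evaluation `bG →+ 𝕋` at an element of `X`. -/
def evalBG (χ : ↥(dual τ)) : (↥(dual τ) →+ 𝕋) →+ 𝕋 where
  toFun := fun w => w χ
  map_zero' := rfl
  map_add' := fun _ _ => rfl

lemma evalBG_continuous (χ : ↥(dual τ)) :
    @Continuous _ _ (Xtop ↥(dual τ)) _ (evalBG τ χ) := by
  letI : TopologicalSpace (↥(dual τ) →+ 𝕋) := Xtop ↥(dual τ)
  exact (continuous_apply χ).comp continuous_induced_dom

/-- Null sequences for the weak topology. -/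
lemma tendsToZero_tauW_iff {x : ℕ → ↥(dual τ)} :
    TendsToZero (tauW τ) x
      ↔ ∀ g : G, Filter.Tendsto (fun n => ((x n : G →+ 𝕋)) g) Filter.atTop (nhds (0 : 𝕋)) := by
  show Filter.Tendsto x Filter.atTop (@nhds _ (tauW τ) 0) ↔ _
  rw [show tauW τ = TopologicalSpace.induced
      (fun χ : ↥(dual τ) => fun g : G => (χ : G →+ 𝕋) g) Pi.topologicalSpace from rfl,
    nhds_induced, Filter.tendsto_comap_iff]
  rw [tendsto_pi_nhds]
  exact Iff.rfl

/-- Null sequences for the weak* topology. -/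
lemma tendsToZero_tauWStar_iff {x : ℕ → ↥(dual τ)} :
    TendsToZero (tauWStar τ) x
      ↔ ∀ ξ : ↥(dual (coTop τ)),
          Filter.Tendsto (fun n => ((ξ : ↥(dual τ) →+ 𝕋)) (x n)) Filter.atTop (nhds (0 : 𝕋)) := by
  show Filter.Tendsto x Filter.atTop (@nhds _ (tauWStar τ) 0) ↔ _
  rw [show tauWStar τ = TopologicalSpace.induced
      (fun χ : ↥(dual τ) => fun ξ : ↥(dual (coTop τ)) => (ξ : ↥(dual τ) →+ 𝕋) χ)
      Pi.topologicalSpace from rfl,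
    nhds_induced, Filter.tendsto_comap_iff]
  rw [tendsto_pi_nhds]
  refine forall_congr' fun ξ => ?_
  have h0 : ((ξ : ↥(dual τ) →+ 𝕋)) 0 = 0 := map_zero _
  rw [h0]
  exact Iff.rfl

/-- The weak topology dual-pair hom. -/
def weakHom : ↥(dual τ) →+ (G → 𝕋) where
  toFun := fun χ => fun g : G => (χ : G →+ 𝕋) g
  map_zero' := by funext g; simp
  map_add' := fun a b => by funext g; simp

def weakStarHom : ↥(dual τ) →+ (↥(dual (coTop τ)) → 𝕋) where
  toFun := fun χ => fun ξ : ↥(dual (coTop τ)) => (ξ : ↥(dual τ) →+ 𝕋) χ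
  map_zero' := by funext ξ; simp
  map_add' := fun a b => by funext ξ; simp [map_add]

lemma isTopFor_tauW : IsTopFor (nullSeqs (tauW τ)) (tauW τ) := by
  refine ⟨?_, ?_, fun u hu => hu⟩
  · exact topologicalAddGroup_induced (weakHom τ)
  · letI := tauW τ
    refine Topology.IsEmbedding.t2Space (Y := G → 𝕋) (f := weakHom τ) ⟨⟨rfl⟩, ?_⟩
    intro a b hab
    exact Subtype.ext (AddMonoidHom.ext fun g => congrFun hab g)

lemma isTopFor_tauWStar : IsTopFor (nullSeqs (tauWStar τ)) (tauWStar τ) := by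
  refine ⟨?_, ?_, fun u hu => hu⟩
  · exact topologicalAddGroup_induced (weakStarHom τ)
  · letI := tauWStar τ
    refine Topology.IsEmbedding.t2Space (Y := ↥(dual (coTop τ)) → 𝕋) (f := weakStarHom τ) ⟨⟨rfl⟩, ?_⟩
    intro a b hab
    refine Subtype.ext (AddMonoidHom.ext fun g => ?_)
    have := congrFun hab ⟨evalHom τ g, evalHom_mem_dual_coTop τ g⟩
    exact this

/-- The infimum of all admissible topologies is the finest one. -/
lemma isFinestFor_sInf {A : Type*} [AddCommGroup A] (S : Set (ℕ → A))
    (τ₀ : TopologicalSpace A) (h₀ : IsTopFor S τ₀) :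
    IsFinestFor S (sInf {τ' | IsTopFor S τ'}) := by
  constructor
  · refine ⟨topologicalAddGroup_sInf fun t ht => ht.1,
      t2Space_antitone (sInf_le (show τ₀ ∈ {τ' | IsTopFor S τ'} from h₀)) h₀.2.1,
      fun u hu => ?_⟩
    show Filter.Tendsto u Filter.atTop (@nhds A (sInf {τ' | IsTopFor S τ'}) 0)
    rw [nhds_sInf]
    exact Filter.tendsto_iInf.mpr fun t => Filter.tendsto_iInf.mpr fun ht => ht.2.2 u hu
  · exact fun τ' h => sInf_le h

lemma isFinestFor_unique {A : Type*} [AddCommGroup A] {S : Set (ℕ → A)}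
    {μ₁ μ₂ : TopologicalSpace A} (h1 : IsFinestFor S μ₁) (h2 : IsFinestFor S μ₂) : μ₁ = μ₂ :=
  le_antisymm (h1.2 _ h2.1) (h2.2 _ h1.1)

/-- Weak* null sequences are weak null sequences. -/
lemma nullSeqs_star_subset : nullSeqs (tauWStar τ) ⊆ nullSeqs (tauW τ) := by
  intro x hx
  have h := (tendsToZero_tauWStar_iff τ).mp hx
  refine (tendsToZero_tauW_iff τ).mpr fun g => ?_
  exact h ⟨evalHom τ g, evalHom_mem_dual_coTop τ g⟩

/-- `SRefEq` is equivalent to equality of the null-sequence families. -/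
lemma sRefEq_iff : SRefEq τ ↔ nullSeqs (tauW τ) = nullSeqs (tauWStar τ) := by
  constructor
  · intro hS
    have h1 := isFinestFor_sInf (nullSeqs (tauW τ)) _ (isTopFor_tauW τ)
    have h2 := isFinestFor_sInf (nullSeqs (tauWStar τ)) _ (isTopFor_tauWStar τ)
    have h12 := isFinestFor_unique ((hS _).mp h1) h2
    refine Set.Subset.antisymm ?_ (nullSeqs_star_subset τ)
    intro x hx
    have hx1 : TendsToZero (sInf {τ' | IsTopFor (nullSeqs (tauW τ)) τ'}) x := h1.1.2.2 x hx
    rw [h12] at hx1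
    have hle : sInf {τ' | IsTopFor (nullSeqs (tauWStar τ)) τ'} ≤ tauWStar τ :=
      sInf_le (show tauWStar τ ∈ {τ' | IsTopFor (nullSeqs (tauWStar τ)) τ'} from isTopFor_tauWStar τ)
    exact hx1.mono_right (nhds_mono hle)
  · intro h μ
    show IsFinestFor (nullSeqs (tauW τ)) μ ↔ IsFinestFor (nullSeqs (tauWStar τ)) μ
    rw [h]

/-- Basic properties of `gClosure`. -/
lemma subset_gClosure {X : Type*} [AddCommGroup X] (ν : TopologicalSpace X) (H : Set X) :
    H ⊆ gClosure ν H := fun h hh =>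
  Set.mem_iInter₂.2 fun _ hu => hu.2 hh

lemma gClosure_mono {X : Type*} [AddCommGroup X] (ν : TopologicalSpace X) {H1 H2 : Set X}
    (h : H1 ⊆ H2) : gClosure ν H1 ⊆ gClosure ν H2 := by
  intro x hx
  refine Set.mem_iInter₂.2 fun u hu => ?_
  exact Set.mem_iInter₂.1 hx u ⟨hu.1, h.trans hu.2⟩

lemma gClosure_gClosure {X : Type*} [AddCommGroup X] (ν : TopologicalSpace X) (H : Set X) :
    gClosure ν (gClosure ν H) ⊆ gClosure ν H := by
  intro x hx
  refine Set.mem_iInter₂.2 fun u hu => ?_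
  refine Set.mem_iInter₂.1 hx u ⟨hu.1, ?_⟩
  intro w hw
  exact Set.mem_iInter₂.1 hw u hu

/-- Key step: the bidual is contained in the `g`-closure of the evaluations. -/
lemma bidual_subset_gClosure (hnull : nullSeqs (tauW τ) ⊆ nullSeqs (tauWStar τ)) :
    ((dual (coTop τ) : AddSubgroup (↥(dual τ) →+ 𝕋)) : Set (↥(dual τ) →+ 𝕋))
      ⊆ gClosure (Xtop ↥(dual τ)) (Set.range (evalHom τ)) := by
  intro ξ hξ
  refine Set.mem_iInter₂.2 fun u hu => ?_
  obtain ⟨hucont, huadm⟩ := hu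
  -- the sequence of restrictions to `G`
  have hycont : ∀ n, @Continuous G 𝕋 τ _ ((u n).comp (evalHomHom τ)) := by
    intro n
    letI := τ
    letI : TopologicalSpace (↥(dual τ) →+ 𝕋) := Xtop ↥(dual τ)
    exact (hucont n).comp (evalHomHom_continuous τ)
  set x : ℕ → ↥(dual τ) := fun n => ⟨(u n).comp (evalHomHom τ), hycont n⟩ with hxdef
  have hx1 : x ∈ nullSeqs (tauW τ) := by
    refine (tendsToZero_tauW_iff τ).mpr fun g => ?_
    have := huadm ⟨g, rfl⟩
    exact this
  have hx2 := (tendsToZero_tauWStar_iff τ).mp (hnull hx1)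
  have hev : Filter.Tendsto (fun n => ξ ((x n : ↥(dual τ)))) Filter.atTop (nhds (0 : 𝕋)) :=
    hx2 ⟨ξ, hξ⟩
  -- each `u n` is an evaluation, by density
  have hu_eval : ∀ n, ∀ w : ↥(dual τ) →+ 𝕋, u n w = w (x n) := by
    intro n w
    have hv : ∀ w', ((u n) - evalBG τ (x n)) w' = 0 := by
      refine char_vanishing τ _ ?_ ?_
      · letI : TopologicalSpace (↥(dual τ) →+ 𝕋) := Xtop ↥(dual τ)
        show Continuous fun w : ↥(dual τ) →+ 𝕋 => u n w - evalBG τ (x n) w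
        exact Continuous.sub (hucont n) (evalBG_continuous τ (x n))
      · intro g
        show u n (evalHom τ g) - (evalHom τ g) (x n) = 0
        have : (evalHom τ g) (x n) = u n (evalHom τ g) := rfl
        rw [this, sub_self]
    have := hv w
    rw [AddMonoidHom.sub_apply, sub_eq_zero] at this
    exact this
  show Filter.Tendsto (fun n => u n ξ) Filter.atTop (nhds (0 : 𝕋))
  have heq : (fun n => u n ξ) = fun n => ξ (x n) := by
    funext n; exact hu_eval n ξ
  rw [heq]
  exact hev

end Soft


noncomputable section Assemble

variable {G : Type*} [AddCommGroup G] (τ : TopologicalSpace G)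

lemma gCloEq_of_null (hnull : nullSeqs (tauW τ) ⊆ nullSeqs (tauWStar τ)) : GCloEq τ := by
  show gClosure (Xtop ↥(dual τ)) (Set.range (evalHom τ))
      = gClosure (Xtop ↥(dual τ)) ↑(dual (coTop τ))
  refine Set.Subset.antisymm ?_ ?_
  · refine gClosure_mono _ ?_
    rintro w ⟨g, rfl⟩
    exact evalHom_mem_dual_coTop τ g
  · exact Set.Subset.trans (gClosure_mono _ (bidual_subset_gClosure τ hnull))
      (gClosure_gClosure _ _)

lemma null_of_gCloEq (hG : GCloEq τ) : nullSeqs (tauW τ) ⊆ nullSeqs (tauWStar τ) := by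
  intro x hx
  refine (tendsToZero_tauWStar_iff τ).mpr fun ξ => ?_
  have hξg : ((ξ : ↥(dual τ) →+ 𝕋)) ∈ gClosure (Xtop ↥(dual τ)) (Set.range (evalHom τ)) := by
    rw [show gClosure (Xtop ↥(dual τ)) (Set.range (evalHom τ)) = _ from hG]
    exact subset_gClosure _ _ ξ.2
  have hx' := (tendsToZero_tauW_iff τ).mp hx
  have hadm : Set.range (evalHom τ) ⊆ su (fun n => evalBG τ (x n)) := by
    rintro w ⟨g, rfl⟩
    exact hx' g
  exact Set.mem_iInter₂.1 hξg (fun n => evalBG τ (x n))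
    ⟨fun n => evalBG_continuous τ (x n), hadm⟩

lemma null_of_reflexive (hR : IsReflexive τ) :
    nullSeqs (tauW τ) ⊆ nullSeqs (tauWStar τ) := by
  obtain ⟨e, he, -, -⟩ := hR
  intro x hx
  have hx' := (tendsToZero_tauW_iff τ).mp hx
  refine (tendsToZero_tauWStar_iff τ).mpr fun ξ => ?_
  have h1 : ((ξ : ↥(dual τ) →+ 𝕋)) = evalHom τ (e.symm ξ) := by
    have h2 := he (e.symm ξ)
    rw [e.apply_symm_apply] at h2
    exact h2
  rw [h1]
  exact hx' (e.symm ξ)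

end Assemble

/-- Proposition 2.12: For a MAP Abelian topological group `G`, conditions
(i) and (ii) are equivalent; in particular if `G` is reflexive then both hold. -/
theorem statement_18 {G : Type*} [AddCommGroup G] (τ : TopologicalSpace G)
    (hg : @IsTopologicalAddGroup G τ _) (hMAP : IsMAP τ) :
    (SRefEq τ ↔ GCloEq τ) ∧ (IsReflexive τ → SRefEq τ ∧ GCloEq τ) := by
  have hiff1 := sRefEq_iff τ
  constructor
  · constructor
    · intro hS
      exact gCloEq_of_null τ (hiff1.mp hS).subset
    · intro hG
      exact hiff1.mpr (Set.Subset.antisymm (null_of_gCloEq τ hG) (nullSeqs_star_subset τ))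
  · intro hR
    have h := null_of_reflexive τ hR
    exact ⟨hiff1.mpr (Set.Subset.antisymm h (nullSeqs_star_subset τ)), gCloEq_of_null τ h⟩
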